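/- Let t ≥ 2 and 1 ≤ d ≤ t−1, and let T be the d-wounded spider S_{t,t−d} (obtained from the star K_{1,t} by subdividing t−d of its edges). Then T is (ι,q)-critical with q = d+1; that is, subdividing any d+1 edges of T increases ι(T), while there exists a set of d edges whose subdivision leaves ι(T) unchanged. -/

import Mathlib

open SimpleGraph

/-- `v` lies in the closed neighbourhood of the set `D`. -/
def inClosedNbhd {V : Type*} (G : SimpleGraph V) (D : Set V) (v : V) : Prop :=
  ∃ d ∈ D, d = v ∨ G.Adj d v

/-- `D` is an isolating set of `G`: the graph induced on the vertices outside
`N[D]` has no edges. -/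
def IsIsolating {V : Type*} (G : SimpleGraph V) (D : Set V) : Prop :=
  ∀ u v : V, G.Adj u v → inClosedNbhd G D u ∨ inClosedNbhd G D v

/-- The isolation number of a finite graph. -/
noncomputable def iso {V : Type*} (G : SimpleGraph V) [Fintype V] : ℕ :=
  sInf {n | ∃ D : Finset V, D.card = n ∧ IsIsolating G ↑D}

/-- The graph obtained from `G` by subdividing each edge in `A` once; the new
(subdivision) vertices are the elements of `A`. -/
def subdivide {V : Type*} (G : SimpleGraph V) (A : Finset (Sym2 V)) :
    SimpleGraph (V ⊕ {e : Sym2 V // e ∈ A}) where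
  Adj x y :=
    match x, y with
    | Sum.inl u, Sum.inl v => G.Adj u v ∧ s(u, v) ∉ A
    | Sum.inl u, Sum.inr e => u ∈ (e : Sym2 V)
    | Sum.inr e, Sum.inl u => u ∈ (e : Sym2 V)
    | Sum.inr _, Sum.inr _ => False
  symm := by
    constructor
    rintro (u | e) (v | f) h <;> dsimp only at h ⊢ <;>
      first
        | exact ⟨h.1.symm, by rw [Sym2.eq_swap]; exact h.2⟩
        | exact h
        | exact h.elim
  loopless := by
    constructor
    rintro (u | e) h <;> dsimp only at h <;>
      first
        | exact G.loopless.irrefl u h.1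
        | exact h

/-- A graph is `(ι,q)`-critical. -/
def IotaCritical {V : Type*} (G : SimpleGraph V) [Fintype V] (q : ℕ) : Prop :=
  (∀ A : Finset (Sym2 V), ↑A ⊆ G.edgeSet → A.card = q →
      iso G < iso (subdivide G A)) ∧
  (∃ A : Finset (Sym2 V), ↑A ⊆ G.edgeSet ∧ A.card = q - 1 ∧
      iso (subdivide G A) = iso G)

/-- The edges of the star `K_{1,t}` that get subdivided to form the
`d`-wounded spider: the edges to the leaves `v_i` with `i ≥ d`. -/
def woundedEdges (t d : ℕ) : Finset (Sym2 (Unit ⊕ Fin t)) :=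
  (Finset.univ.filter (fun i : Fin t => d ≤ (i : ℕ))).image
    (fun i => s(Sum.inl (), Sum.inr i))

/-- The `d`-wounded spider `S_{t,t-d}`, obtained from the star `K_{1,t}`
by subdividing `t - d` of its edges. -/
def woundedSpider (t d : ℕ) :=
  subdivide (completeBipartiteGraph Unit (Fin t)) (woundedEdges t d)

/-!
The centre `x` of the spider dominates every edge, so `ι = 1`, and it still does after
subdividing the `d` short edges `x v_i`: these are pendant, so each new vertex is adjacent to `x`
and the leaf `v_i` has no other edge.

Conversely, `d + 1` subdivided edges cannot all be short, so some long leg `j` gets length at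
least three and its last edge is out of reach of `x`. A vertex isolating that edge lies on
leg `j`, a vertex set that meets the rest of the graph only at `x`, so it cannot isolate an
edge inside another leg; such an edge exists unless all subdivided edges lie on leg `j`. In that
case `d = 1` and leg `j` has length four: with its first vertex `a` removed it hangs at `a`, so the
isolating vertex stays away from `N[x]` and misses the short edge `x v_0`.
-/

section Isolation

variable {V : Type*} {G : SimpleGraph V}

lemma IsIsolating.mono {D D' : Set V} (hD : IsIsolating G D) (h : D ⊆ D') :
    IsIsolating G D' := fun u v huv =>
  (hD u v huv).imp (fun ⟨w, hw, hwu⟩ => ⟨w, h hw, hwu⟩)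
    (fun ⟨w, hw, hwv⟩ => ⟨w, h hw, hwv⟩)

lemma inClosedNbhd_singleton {v u : V} : inClosedNbhd G {v} u ↔ v = u ∨ G.Adj v u := by
  simp [inClosedNbhd]

lemma isIsolating_singleton_iff {v : V} :
    IsIsolating G {v} ↔
      ∀ a b, G.Adj a b → (v = a ∨ G.Adj v a) ∨ (v = b ∨ G.Adj v b) := by
  simp only [IsIsolating, inClosedNbhd_singleton]

variable [Fintype V]

lemma exists_isIsolating_card_eq_iso : ∃ D : Finset V, D.card = iso G ∧ IsIsolating G ↑D :=
  Nat.sInf_mem (s := {n | ∃ D : Finset V, D.card = n ∧ IsIsolating G ↑D})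
    ⟨_, Finset.univ, rfl, fun u _ _ => Or.inl ⟨u, by simp, Or.inl rfl⟩⟩

lemma iso_le_card {D : Finset V} (hD : IsIsolating G ↑D) : iso G ≤ D.card :=
  Nat.sInf_le ⟨D, rfl, hD⟩

lemma iso_pos {a b : V} (hab : G.Adj a b) : 0 < iso G := by
  obtain ⟨D, hcard, hD⟩ := exists_isIsolating_card_eq_iso (G := G)
  refine Nat.pos_of_ne_zero fun h0 => ?_
  rw [h0, Finset.card_eq_zero] at hcard
  subst hcard
  rcases hD a b hab with ⟨w, hw, -⟩ | ⟨w, hw, -⟩ <;> simp at hw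

lemma iso_eq_one {v a b : V} (hv : IsIsolating G {v}) (hab : G.Adj a b) : iso G = 1 :=
  le_antisymm (by simpa using iso_le_card (G := G) (D := {v}) (by simpa using hv)) (iso_pos hab)

lemma one_lt_iso [Nonempty V] (h : ∀ v, ¬ IsIsolating G {v}) : 1 < iso G := by
  obtain ⟨D, hcard, hD⟩ := exists_isIsolating_card_eq_iso (G := G)
  by_contra hle
  obtain ⟨v, hv⟩ := Finset.card_le_one_iff_subset_singleton.1 (hcard ▸ not_lt.1 hle)
  exact h v (hD.mono fun y hy => by simpa using hv hy)

end Isolation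

namespace SimpleGraph

variable {V : Type*} {G : SimpleGraph V}

def HangsAt (G : SimpleGraph V) (S : Set V) (x : V) : Prop :=
  ∀ ⦃u w⦄, u ∈ S → G.Adj u w → w ∈ S ∨ w = x

theorem HangsAt.not_isIsolating_singleton {S : Set V} {x p q p' q' : V} (hS : G.HangsAt S x)
    (hpq : G.Adj p q) (hp : p ∈ S) (hq : q ∈ S) (hxp : ¬ G.Adj x p) (hxq : ¬ G.Adj x q)
    (hpq' : G.Adj p' q') (hp' : p' ∉ S) (hq' : q' ∉ S) (hp'x : p' ≠ x) (hq'x : q' ≠ x)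
    (v : V) :
    ¬ IsIsolating G {v} := by
  have near_inside : ∀ y ∈ S, ¬ G.Adj x y → v = y ∨ G.Adj v y → v ∈ S := by
    rintro y hy hxy (rfl | hvy)
    · exact hy
    · rcases hS hy hvy.symm with h | rfl
      · exact h
      · exact absurd hvy hxy
  have near_outside : ∀ y ∉ S, y ≠ x → v = y ∨ G.Adj v y → v ∉ S := by
    rintro y hy hyx (rfl | hvy) hv
    · exact hy hv
    · exact (hS hv hvy).elim hy hyx
  intro hv
  rw [isIsolating_singleton_iff] at hv
  have hvS := (hv p q hpq).elim (near_inside p hp hxp) (near_inside q hq hxq)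
  exact (hv p' q' hpq').elim (near_outside p' hp' hp'x · hvS) (near_outside q' hq' hq'x · hvS)

theorem HangsAt.diff_singleton {S : Set V} {x a : V} (hS : G.HangsAt S x)
    (hx : ∀ u ∈ S, G.Adj x u → u = a) : G.HangsAt (S \ {a}) a := by
  rintro u w ⟨hu, hua⟩ huw
  rcases hS hu huw with hw | rfl
  · by_cases hwa : w = a
    · exact Or.inr hwa
    · exact Or.inl ⟨hw, hwa⟩
  · exact absurd (hx u hu huw.symm) hua

end SimpleGraph

section Subdivision

variable {V : Type*} {G : SimpleGraph V} {A : Finset (Sym2 V)}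

@[simp] lemma subdivide_adj_inl_inl {u v : V} :
    (subdivide G A).Adj (Sum.inl u) (Sum.inl v) ↔ G.Adj u v ∧ s(u, v) ∉ A := Iff.rfl

@[simp] lemma subdivide_adj_inl_inr {u : V} {e : {e // e ∈ A}} :
    (subdivide G A).Adj (Sum.inl u) (Sum.inr e) ↔ u ∈ (e : Sym2 V) := Iff.rfl

@[simp] lemma subdivide_adj_inr_inl {u : V} {e : {e // e ∈ A}} :
    (subdivide G A).Adj (Sum.inr e) (Sum.inl u) ↔ u ∈ (e : Sym2 V) := Iff.rfl

@[simp] lemma not_subdivide_adj_inr_inr {e f : {e // e ∈ A}} :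
    ¬ (subdivide G A).Adj (Sum.inr e) (Sum.inr f) := id

def subdivisionLift (A : Finset (Sym2 V)) (S : Set V) : Set (V ⊕ {e // e ∈ A}) :=
  {z | Sum.elim (· ∈ S) (fun e => ∃ v ∈ S, v ∈ (e : Sym2 V)) z}

@[simp] lemma inl_mem_subdivisionLift {S : Set V} {v : V} :
    Sum.inl v ∈ subdivisionLift A S ↔ v ∈ S := Iff.rfl

@[simp] lemma inr_mem_subdivisionLift {S : Set V} {e : {e // e ∈ A}} :
    Sum.inr e ∈ subdivisionLift A S ↔ ∃ v ∈ S, v ∈ (e : Sym2 V) := Iff.rfl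

lemma adj_of_mem_of_mem (hA : ↑A ⊆ G.edgeSet) {e : Sym2 V} (he : e ∈ A) {u w : V}
    (hu : u ∈ e) (hw : w ∈ e) (huw : u ≠ w) : G.Adj u w := by
  rw [← G.mem_edgeSet, ← (Sym2.mem_and_mem_iff huw).1 ⟨hu, hw⟩]
  exact hA he

namespace SimpleGraph.HangsAt

variable {S : Set V} {x : V}

theorem subdivide (hS : G.HangsAt S x) (hA : ↑A ⊆ G.edgeSet) :
    (subdivide G A).HangsAt (subdivisionLift A S) (Sum.inl x) := by
  rintro (u | e) (w | f) hu huw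
  · exact (hS hu huw.1).imp id (congrArg Sum.inl)
  · exact Or.inl ⟨u, hu, huw⟩
  · obtain ⟨v, hv, hve⟩ := hu
    by_cases hvw : v = w
    · exact Or.inl (hvw ▸ hv)
    · exact (hS hv (adj_of_mem_of_mem hA e.2 hve huw hvw)).imp id (congrArg Sum.inl)
  · exact huw.elim

theorem disjoint_subdivisionLift {T : Set V} (hS : G.HangsAt S x) (hxT : x ∉ T)
    (hST : Disjoint S T) (hA : ↑A ⊆ G.edgeSet) :
    Disjoint (subdivisionLift A S) (subdivisionLift A T) := by
  rw [Set.disjoint_left]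
  rintro (u | e) hu hu'
  · exact Set.disjoint_left.1 hST hu hu'
  · obtain ⟨v, hv, hve⟩ := hu
    obtain ⟨w, hw, hwe⟩ := hu'
    have hvw : v ≠ w := fun h => Set.disjoint_left.1 hST hv (h ▸ hw)
    rcases hS hv (adj_of_mem_of_mem hA e.2 hve hwe hvw) with h | rfl
    · exact Set.disjoint_left.1 hST h hw
    · exact hxT hw

end SimpleGraph.HangsAt

theorem IsIsolating.subdivide_of_pendant {x : V} (hx : IsIsolating G {x})
    (hA : ∀ e ∈ A, ∃ u, e = s(x, u) ∧ ∀ w, G.Adj u w → w = x) :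
    IsIsolating (subdivide G A) {Sum.inl x} := by
  rw [isIsolating_singleton_iff] at hx ⊢
  have near_of_near {u w : V} (huw : G.Adj u w) (hA' : s(u, w) ∉ A) (hu : x = u ∨ G.Adj x u) :
      Sum.inl x = (Sum.inl u : V ⊕ {e // e ∈ A}) ∨
        (subdivide G A).Adj (Sum.inl x) (Sum.inl u) := by
    rcases hu with rfl | hxu
    · exact Or.inl rfl
    · refine Or.inr ⟨hxu, fun hxuA => hA' ?_⟩
      obtain ⟨u', he, hpend⟩ := hA _ hxuA
      obtain rfl := Sym2.congr_right.1 he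
      rwa [hpend w huw, Sym2.eq_swap]
  have mem_of_mem (e : {e // e ∈ A}) : x ∈ (e : Sym2 V) := by
    obtain ⟨u, he, -⟩ := hA e e.2
    simp [he]
  rintro (u | e) (w | f) huw
  · exact (hx u w huw.1).imp (near_of_near huw.1 huw.2)
      (near_of_near huw.1.symm (by rw [Sym2.eq_swap]; exact huw.2))
  · exact Or.inr (Or.inr (mem_of_mem f))
  · exact Or.inl (Or.inr (mem_of_mem e))
  · exact huw.elim

end Subdivision

namespace WoundedSpider

open Finset

variable {t d : ℕ}

abbrev Vertex (t d : ℕ) := (Unit ⊕ Fin t) ⊕ {e // e ∈ woundedEdges t d}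

abbrev center : Vertex t d := Sum.inl (Sum.inl ())

abbrev leaf (i : Fin t) : Vertex t d := Sum.inl (Sum.inr i)

lemma mem_woundedEdges_iff {j : Fin t} :
    s(Sum.inl (), Sum.inr j) ∈ woundedEdges t d ↔ d ≤ (j : ℕ) := by
  simp [woundedEdges]

abbrev mid (j : Fin t) (hj : d ≤ (j : ℕ)) : Vertex t d :=
  Sum.inr ⟨s(Sum.inl (), Sum.inr j), mem_woundedEdges_iff.2 hj⟩

lemma vertex_cases (v : Vertex t d) :
    v = center ∨ (∃ i, v = leaf i) ∨ ∃ j hj, v = mid j hj := by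
  rcases v with (⟨⟩ | i) | ⟨e, he⟩
  · exact Or.inl rfl
  · exact Or.inr (Or.inl ⟨i, rfl⟩)
  · obtain ⟨j, hj, rfl⟩ : ∃ j : Fin t, d ≤ (j : ℕ) ∧ s(Sum.inl (), Sum.inr j) = e := by
      simpa [woundedEdges] using he
    exact Or.inr (Or.inr ⟨j, hj, rfl⟩)

@[simp] lemma adj_center_leaf {i : Fin t} :
    (woundedSpider t d).Adj center (leaf i) ↔ (i : ℕ) < d := by
  simp [woundedSpider, mem_woundedEdges_iff]

@[simp] lemma adj_leaf_center {i : Fin t} :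
    (woundedSpider t d).Adj (leaf i) center ↔ (i : ℕ) < d := by
  rw [adj_comm, adj_center_leaf]

@[simp] lemma adj_center_mid {j : Fin t} (hj : d ≤ (j : ℕ)) :
    (woundedSpider t d).Adj center (mid j hj) := by
  simp [woundedSpider]

@[simp] lemma adj_mid_leaf {i j : Fin t} (hj : d ≤ (j : ℕ)) :
    (woundedSpider t d).Adj (mid j hj) (leaf i) ↔ i = j := by
  simp [woundedSpider]

@[simp] lemma adj_leaf_mid {i j : Fin t} (hj : d ≤ (j : ℕ)) :
    (woundedSpider t d).Adj (leaf i) (mid j hj) ↔ i = j := by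
  rw [adj_comm, adj_mid_leaf]

@[simp] lemma not_adj_leaf_leaf {i j : Fin t} : ¬ (woundedSpider t d).Adj (leaf i) (leaf j) := by
  simp [woundedSpider]

@[simp] lemma not_adj_mid_mid {i j : Fin t} (hi : d ≤ (i : ℕ)) (hj : d ≤ (j : ℕ)) :
    ¬ (woundedSpider t d).Adj (mid i hi) (mid j hj) :=
  not_subdivide_adj_inr_inr

def shortEdges (t d : ℕ) : Finset (Sym2 (Vertex t d)) :=
  (univ.filter fun i : Fin t => (i : ℕ) < d).image fun i => s(center, leaf i)

@[simp] lemma mem_shortEdges {e : Sym2 (Vertex t d)} :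
    e ∈ shortEdges t d ↔ ∃ i : Fin t, (i : ℕ) < d ∧ s(center, leaf i) = e := by
  simp [shortEdges]

lemma card_shortEdges (h : d ≤ t) : (shortEdges t d).card = d := by
  rw [shortEdges, card_image_of_injective _ fun i i' hi => by simpa using hi,
    Fin.card_filter_val_lt, min_eq_right h]

lemma edge_cases {e : Sym2 (Vertex t d)} (he : e ∈ (woundedSpider t d).edgeSet) :
    e ∈ shortEdges t d ∨ ∃ j hj, e = s(center, mid j hj) ∨ e = s(mid j hj, leaf j) := by
  induction e using Sym2.ind with
  | _ u v =>
    rw [mem_edgeSet] at he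
    rcases vertex_cases u with rfl | ⟨i, rfl⟩ | ⟨j, hj, rfl⟩ <;>
      rcases vertex_cases v with rfl | ⟨i', rfl⟩ | ⟨j', hj', rfl⟩ <;>
      simp_all

lemma woundedEdges_subset_edgeSet :
    ↑(woundedEdges t d) ⊆ (completeBipartiteGraph Unit (Fin t)).edgeSet := by
  intro e he
  obtain ⟨j, -, rfl⟩ : ∃ j : Fin t, d ≤ (j : ℕ) ∧ s(Sum.inl (), Sum.inr j) = e := by
    simpa [woundedEdges] using he
  simp

def leg (j : Fin t) : Set (Vertex t d) := subdivisionLift (woundedEdges t d) {Sum.inr j}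

@[simp] lemma center_not_mem_leg {j : Fin t} : center ∉ leg (d := d) j := by
  simp [leg]

@[simp] lemma leaf_mem_leg {i j : Fin t} : leaf i ∈ leg (d := d) j ↔ i = j := by
  simp [leg]

@[simp] lemma mid_mem_leg {j k : Fin t} (hk : d ≤ (k : ℕ)) : mid k hk ∈ leg j ↔ k = j := by
  simp [leg, eq_comm]

lemma hangsAt_leaf_star (j : Fin t) :
    (completeBipartiteGraph Unit (Fin t)).HangsAt {Sum.inr j} (Sum.inl ()) := by
  rintro u (⟨⟩ | w) rfl huw
  · exact Or.inr rfl
  · simp at huw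

lemma hangsAt_leg (j : Fin t) : (woundedSpider t d).HangsAt (leg j) center :=
  (hangsAt_leaf_star j).subdivide woundedEdges_subset_edgeSet

lemma disjoint_leg {j k : Fin t} (hjk : j ≠ k) : Disjoint (leg (d := d) j) (leg k) :=
  (hangsAt_leaf_star j).disjoint_subdivisionLift (by simp) (by simpa using hjk)
    woundedEdges_subset_edgeSet

variable {A : Finset (Sym2 (Vertex t d))}

lemma exists_adj_leaf_far_from_center {j : Fin t} (hj : d ≤ (j : ℕ))
    (hA : s(center, mid j hj) ∈ A ∨ s(mid j hj, leaf j) ∈ A) :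
    ∃ w, (subdivide (woundedSpider t d) A).Adj w (Sum.inl (leaf j)) ∧
      w ∈ subdivisionLift A (leg j) ∧
      ¬ (subdivide (woundedSpider t d) A).Adj (Sum.inl center) w := by
  by_cases hb : s(mid j hj, leaf j) ∈ A
  · exact ⟨Sum.inr ⟨_, hb⟩, by simp, ⟨leaf j, by simp⟩, by simp⟩
  · exact ⟨Sum.inl (mid j hj), by simpa using hb, by simp, fun h => h.2 (hA.resolve_right hb)⟩

lemma not_isIsolating_of_other_leg (hA : ↑A ⊆ (woundedSpider t d).edgeSet) {j k : Fin t}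
    (hj : d ≤ (j : ℕ)) (hjA : s(center, mid j hj) ∈ A ∨ s(mid j hj, leaf j) ∈ A)
    {e : Sym2 (Vertex t d)} (he : e ∈ A) {u : Vertex t d} (hue : u ∈ e) (hu : u ∈ leg k)
    (hkj : k ≠ j) (v) : ¬ IsIsolating (subdivide (woundedSpider t d) A) {v} := by
  obtain ⟨w, hw, hwS, hcw⟩ := exists_adj_leaf_far_from_center hj hjA
  have hdisj := (hangsAt_leg k).disjoint_subdivisionLift center_not_mem_leg (disjoint_leg hkj) hA
  refine ((hangsAt_leg j).subdivide hA).not_isIsolating_singleton hw hwS (by simp) hcw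
    (by simp [not_lt.2 hj]) (p' := Sum.inr ⟨e, he⟩) (subdivide_adj_inr_inl.2 hue)
    (Set.disjoint_left.1 hdisj ⟨u, hu, hue⟩) (Set.disjoint_left.1 hdisj hu) Sum.inr_ne_inl ?_ v
  rintro ⟨⟩
  exact center_not_mem_leg hu

lemma not_isIsolating_of_long_leg_subdivided (hA : ↑A ⊆ (woundedSpider t d).edgeSet)
    {i j : Fin t} (hi : (i : ℕ) < d) (hj : d ≤ (j : ℕ))
    (hA₂ : A ⊆ {s(center, mid j hj), s(mid j hj, leaf j)}) (h₁ : s(center, mid j hj) ∈ A)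
    (h₂ : s(mid j hj, leaf j) ∈ A) (v) :
    ¬ IsIsolating (subdivide (woundedSpider t d) A) {v} := by
  have hij : i ≠ j := fun h => by subst h; omega
  have hS := ((hangsAt_leg j).subdivide hA).diff_singleton (a := Sum.inr ⟨_, h₁⟩) <| by
    rintro (u | ⟨e, he⟩) hu hadj
    · rcases vertex_cases u with rfl | ⟨i', rfl⟩ | ⟨j', hj', rfl⟩ <;> simp_all; omega
    · rcases Finset.mem_insert.1 (hA₂ he) with rfl | he'
      · rfl
      · simp [Finset.mem_singleton.1 he'] at hadj
  exact hS.not_isIsolating_singleton (p := Sum.inr ⟨_, h₂⟩) (q := Sum.inl (leaf j))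
    (p' := Sum.inl center) (q' := Sum.inl (leaf i)) (by simp) (by simp) (by simp) (by simp)
    (by simp) ⟨adj_center_leaf.2 hi, fun h => by simpa using hA₂ h⟩ (by simp)
    (by simpa using hij)
    (by simp) (by simp) v

lemma not_isIsolating_singleton (hd : 1 ≤ d) (hdt : d ≤ t)
    (hA : ↑A ⊆ (woundedSpider t d).edgeSet) (hcard : A.card = d + 1) (v) :
    ¬ IsIsolating (subdivide (woundedSpider t d) A) {v} := by
  obtain ⟨e, heA, he⟩ := exists_mem_notMem_of_card_lt_card (s := shortEdges t d) (t := A) <| by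
    rw [card_shortEdges hdt, hcard]
    exact d.lt_succ_self
  obtain ⟨j, hj, hje⟩ := (edge_cases (hA heA)).resolve_left he
  have hjA : s(center, mid j hj) ∈ A ∨ s(mid j hj, leaf j) ∈ A := by
    rcases hje with rfl | rfl <;> simp [heA]
  by_cases hA₂ : A ⊆ {s(center, mid j hj), s(mid j hj, leaf j)}
  · have hpair := eq_of_subset_of_card_le hA₂ (card_le_two.trans (by omega))
    exact not_isIsolating_of_long_leg_subdivided hA (i := ⟨0, by omega⟩) hd hj hA₂
      (by simp [hpair]) (by simp [hpair]) v
  · obtain ⟨e', he'A, he'⟩ := not_subset.1 hA₂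
    obtain ⟨k, u, hue, hu, hkj⟩ : ∃ k, ∃ u ∈ e', u ∈ leg k ∧ k ≠ j := by
      rcases edge_cases (hA he'A) with h | ⟨k, hk, rfl | rfl⟩
      · obtain ⟨i, hi, rfl⟩ := mem_shortEdges.1 h
        exact ⟨i, leaf i, by simp, by simp, fun h => by subst h; omega⟩
      all_goals exact ⟨k, mid k hk, by simp, by simp, by rintro rfl; simp at he'⟩
    exact not_isIsolating_of_other_leg hA hj hjA he'A hue hu hkj v

lemma isIsolating_center : IsIsolating (woundedSpider t d) {center} := by
  rw [isIsolating_singleton_iff]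
  intro a b hab
  rcases vertex_cases a with rfl | ⟨i, rfl⟩ | ⟨j, hj, rfl⟩ <;>
    rcases vertex_cases b with rfl | ⟨i', rfl⟩ | ⟨j', hj', rfl⟩ <;> simp_all

lemma iso_woundedSpider (hd : 1 ≤ d) (hdt : d ≤ t) : iso (woundedSpider t d) = 1 :=
  iso_eq_one isIsolating_center (adj_center_leaf (i := ⟨0, by omega⟩).2 hd)

lemma shortEdges_subset_edgeSet : ↑(shortEdges t d) ⊆ (woundedSpider t d).edgeSet := by
  intro e he
  obtain ⟨i, hi, rfl⟩ := mem_shortEdges.1 he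
  simpa using hi

lemma iso_subdivide_shortEdges (hd : 1 ≤ d) (hdt : d ≤ t) :
    iso (subdivide (woundedSpider t d) (shortEdges t d)) = 1 := by
  have h₀ : s(center, leaf ⟨0, by omega⟩) ∈ shortEdges t d :=
    mem_shortEdges.2 ⟨⟨0, _⟩, hd, rfl⟩
  refine iso_eq_one (isIsolating_center.subdivide_of_pendant fun e he => ?_)
    (a := Sum.inl center) (b := Sum.inr ⟨_, h₀⟩) (by simp)
  obtain ⟨i, hi, rfl⟩ := mem_shortEdges.1 he
  refine ⟨leaf i, rfl, fun w hw => ?_⟩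
  rcases vertex_cases w with rfl | ⟨i', rfl⟩ | ⟨j, hj, rfl⟩ <;> simp_all
  omega

end WoundedSpider

open WoundedSpider

theorem stmt7_general (t d : ℕ) (hd1 : 1 ≤ d) (hd2 : d ≤ t - 1) :
    IotaCritical (woundedSpider t d) (d + 1) := by
  have hdt : d ≤ t := by omega
  refine ⟨fun A hA hcard => ?_, shortEdges t d, shortEdges_subset_edgeSet, ?_, ?_⟩
  · rw [iso_woundedSpider hd1 hdt]
    exact one_lt_iso (not_isIsolating_singleton hd1 hdt hA hcard)
  · rw [card_shortEdges hdt, Nat.add_sub_cancel]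
  · rw [iso_woundedSpider hd1 hdt, iso_subdivide_shortEdges hd1 hdt]

theorem stmt7 (t d : ℕ) (ht : 2 ≤ t) (hd1 : 1 ≤ d) (hd2 : d ≤ t - 1) :
    IotaCritical (woundedSpider t d) (d + 1) :=
  stmt7_general t d hd1 hd2
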